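/- For 1 ≤ r ≤ n and the idempotent e_m ∈ T_n (e_m(i)=i for i≤m, e_m(i)=1 for i>m), we have e_m · Λ^{r−1}(Aug(ℂ^n)) = 0 if and only if m < r. In particular, every map f ∈ T_n of rank less than r acts as zero on Λ^{r−1}(Aug(ℂ^n)). -/

import Mathlib

open Finset in
/-- The natural representation of the full transformation monoid `Function.End (Fin n)`
on `ℂ^n`, determined by `f · v_i = v_{f i}` on the standard basis. -/
noncomputable def natRep (n : ℕ) :
    Representation ℂ (Function.End (Fin n)) (Fin n → ℂ) where
  toFun f :=
    { toFun := fun x j => ∑ i, if f i = j then x i else 0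
      map_add' := by
        intro x y
        funext j
        simp only [Pi.add_apply]
        rw [← Finset.sum_add_distrib]
        congr 1; funext i; split <;> simp
      map_smul' := by
        intro c x
        funext j
        simp [Finset.mul_sum, apply_ite (fun t => c * t)] }
  map_one' := by
    refine LinearMap.ext fun x => funext fun j => ?_
    show (∑ i, if (1 : Function.End (Fin n)) i = j then x i else 0) = x j
    have h : ∀ i : Fin n, (1 : Function.End (Fin n)) i = i := fun _ => rfl
    simp only [h]
    rw [Finset.sum_ite_eq' Finset.univ j x]
    simp
  map_mul' := by
    intro f g
    refine LinearMap.ext fun x => funext fun j => ?_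
    show (∑ i, if f (g i) = j then x i else 0)
        = ∑ k, if f k = j then ∑ i, if g i = k then x i else 0 else 0
    have key : ∀ k, (if f k = j then ∑ i, if g i = k then x i else 0 else 0)
        = ∑ i, if g i = k then (if f k = j then x i else 0) else 0 := by
      intro k; split
      · rfl
      · simp
    rw [Finset.sum_congr rfl (fun k _ => key k), Finset.sum_comm]
    refine Finset.sum_congr rfl fun i _ => ?_
    rw [Finset.sum_ite_eq Finset.univ (g i) (fun k => if f k = j then x i else 0)]
    simp

lemma sum_natRep (n : ℕ) (f : Function.End (Fin n)) (x : Fin n → ℂ) :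
    ∑ j, natRep n f x j = ∑ i, x i := by
  show ∑ j, ∑ i, (if f i = j then x i else 0) = _
  rw [Finset.sum_comm]
  simp [Finset.sum_ite_eq' Finset.univ]

/-- The augmentation submodule `Aug(ℂ^n)` of the natural module: vectors whose
coordinates sum to zero. -/
noncomputable def Aug (n : ℕ) : Submodule ℂ (Fin n → ℂ) where
  carrier := {x | ∑ i, x i = 0}
  add_mem' := by intro a b ha hb; simp_all [Finset.sum_add_distrib]
  zero_mem' := by simp
  smul_mem' := by intro c a ha; simp_all [← Finset.mul_sum]

lemma natRep_mem_aug (n : ℕ) (f : Function.End (Fin n)) {x : Fin n → ℂ}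
    (hx : x ∈ Aug n) : natRep n f x ∈ Aug n := by
  have : ∑ j, natRep n f x j = 0 := by rw [sum_natRep]; exact hx
  exact this

/-- The representation of the full transformation monoid on the augmentation submodule. -/
noncomputable def augRep (n : ℕ) : Representation ℂ (Function.End (Fin n)) (Aug n) where
  toFun f := (natRep n f).restrict (p := Aug n) (q := Aug n) (fun _ hx => natRep_mem_aug n f hx)
  map_one' := by
    refine LinearMap.ext fun x => Subtype.ext ?_
    simp [LinearMap.restrict_apply]
  map_mul' := by
    intro f g
    refine LinearMap.ext fun x => Subtype.ext ?_
    simp [LinearMap.restrict_apply]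

lemma extAlg_map_mem {R M N : Type} [CommRing R] [AddCommGroup M] [Module R M]
    [AddCommGroup N] [Module R N] (r : ℕ) (f : M →ₗ[R] N) {x : ExteriorAlgebra R M}
    (hx : x ∈ ⋀[R]^r M) : ExteriorAlgebra.map f x ∈ ⋀[R]^r N := by
  rw [← ExteriorAlgebra.ιMulti_span_fixedDegree] at hx ⊢
  induction hx using Submodule.span_induction with
  | mem y hy =>
      obtain ⟨v, rfl⟩ := hy
      rw [ExteriorAlgebra.map_apply_ιMulti]
      exact Submodule.subset_span ⟨f ∘ v, rfl⟩
  | zero => simp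
  | add y z _ _ hy hz => rw [map_add]; exact Submodule.add_mem _ hy hz
  | smul c y _ hy => rw [map_smul]; exact Submodule.smul_mem _ c hy

/-- The linear map between `r`-th exterior powers induced by a linear map. -/
noncomputable def extMap {R M N : Type} [CommRing R] [AddCommGroup M] [Module R M]
    [AddCommGroup N] [Module R N] (r : ℕ) (f : M →ₗ[R] N) :
    ⋀[R]^r M →ₗ[R] ⋀[R]^r N :=
  (ExteriorAlgebra.map f).toLinearMap.restrict (p := ⋀[R]^r M) (q := ⋀[R]^r N)
    (fun _ hx => extAlg_map_mem r f hx)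

/-- The representation of the full transformation monoid on the `r`-th exterior power
of the natural module, by the diagonal action on wedge products. -/
noncomputable def extRep (n r : ℕ) :
    Representation ℂ (Function.End (Fin n)) (⋀[ℂ]^r (Fin n → ℂ)) where
  toFun f := extMap r (natRep n f)
  map_one' := by
    refine LinearMap.ext fun x => Subtype.ext ?_
    simp [extMap, LinearMap.restrict_apply, map_one, Module.End.one_eq_id,
      ExteriorAlgebra.map_id]
  map_mul' := by
    intro f g
    refine LinearMap.ext fun x => Subtype.ext ?_
    simp only [extMap, LinearMap.restrict_apply, map_mul, Module.End.mul_eq_comp,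
      ← ExteriorAlgebra.map_comp_map]
    rfl

set_option synthInstance.maxHeartbeats 1000000 in
/-- The representation of the full transformation monoid on the `r`-th exterior power
of the augmentation submodule. -/
noncomputable def extAugRep (n r : ℕ) :
    Representation ℂ (Function.End (Fin n)) (⋀[ℂ]^r ↥(Aug n)) where
  toFun f := extMap r (augRep n f)
  map_one' := by
    refine LinearMap.ext fun x => Subtype.ext ?_
    simp [extMap, LinearMap.restrict_apply, map_one, Module.End.one_eq_id,
      ExteriorAlgebra.map_id]
  map_mul' := by
    intro f g
    refine LinearMap.ext fun x => Subtype.ext ?_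
    simp only [extMap, LinearMap.restrict_apply, map_mul, Module.End.mul_eq_comp,
      ← ExteriorAlgebra.map_comp_map]
    rfl

/-- The idempotent `e_m ∈ T_n` fixing the first `m` points and sending all other
points to the first point. -/
def eIdem (n m : ℕ) : Function.End (Fin n) :=
  fun i => if h : (i : ℕ) < m then i else ⟨0, i.pos⟩

/-- The embedding of the symmetric group `S_r` into `T_n` as the maximal subgroup
at the idempotent `eIdem n r` (elements `g` with `e g e = g` invertible in `e T_n e`). -/
def permEmbed (n r : ℕ) (hr : 1 ≤ r) (hrn : r ≤ n) (σ : Equiv.Perm (Fin r)) :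
    Function.End (Fin n) :=
  fun i => Fin.castLE hrn (σ (if hi : (i : ℕ) < r then ⟨i, hi⟩ else ⟨0, hr⟩))

/-- The idempotent `η = (1/r!) ∑_{g ∈ G} sgn(g|_{[r]}) g` of the monoid algebra,
where `G ≅ S_r` is the maximal subgroup at `eIdem n r`. -/
noncomputable def eta (n r : ℕ) (hr : 1 ≤ r) (hrn : r ≤ n) :
    MonoidAlgebra ℂ (Function.End (Fin n)) :=
  (r.factorial : ℂ)⁻¹ • ∑ σ : Equiv.Perm (Fin r),
    MonoidAlgebra.single (permEmbed n r hr hrn σ) ((Equiv.Perm.sign σ : ℤ) : ℂ)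

/-- A permutation of `Fin m`, viewed as an element of the transformation monoid. -/
def permToEnd (m : ℕ) : Equiv.Perm (Fin m) →* Function.End (Fin m) where
  toFun σ := ⇑σ
  map_one' := rfl
  map_mul' := fun _ _ => rfl

/-- The wedge product of a family of `r` vectors, as an element of the `r`-th
exterior power. -/
noncomputable def wedge {M : Type} [AddCommGroup M] [Module ℂ M] (r : ℕ) (v : Fin r → M) :
    ⋀[ℂ]^r M :=
  ⟨ExteriorAlgebra.ιMulti ℂ r v, ExteriorAlgebra.ιMulti_range ℂ r ⟨v, rfl⟩⟩

/-- The basis `w_1, …, w_n` of `ℂ^n`: `w_i = v_i - v_n` for `i < n` and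
`w_n = v_1 + ⋯ + v_n`. -/
noncomputable def wBasis (n : ℕ) : Fin n → (Fin n → ℂ) :=
  fun i => if h : (i : ℕ) < n - 1
    then Pi.single i 1 - Pi.single (⟨n - 1, by omega⟩ : Fin n) 1
    else ∑ j, Pi.single j 1

lemma wBasis_mem_aug (n : ℕ) (i : Fin n) (h : (i : ℕ) < n - 1) : wBasis n i ∈ Aug n := by
  show ∑ j, wBasis n i j = 0
  simp [wBasis, h, Finset.sum_sub_distrib, Finset.sum_pi_single]

/-- The vectors `w_i = v_i - v_n` (for `i < n`) as elements of the augmentation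
submodule; junk value `0` otherwise. -/
noncomputable def wAug (n : ℕ) : Fin n → ↥(Aug n) :=
  fun i => if h : (i : ℕ) < n - 1 then ⟨wBasis n i, wBasis_mem_aug n i h⟩ else 0

/-- The trivial representation of the full transformation monoid on `ℂ`. -/
noncomputable def trivRep (n : ℕ) : Representation ℂ (Function.End (Fin n)) ℂ := 1

/-- `projDimLE R M k` : the `R`-module `M` admits a projective resolution of length
at most `k`, i.e. has projective dimension at most `k`. -/
def projDimLE (R : Type) [Ring R] (M : Type) [AddCommMonoid M] [Module R M] (k : ℕ) : Prop :=
  ∃ (P : ℕ → ModuleCat.{0} R) (d : (i : ℕ) → (P (i + 1) →ₗ[R] P i)) (π : P 0 →ₗ[R] M),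
    (∀ i, Module.Projective R (P i)) ∧
    Function.Surjective π ∧
    LinearMap.ker π = LinearMap.range (d 0) ∧
    (∀ i, LinearMap.ker (d i) = LinearMap.range (d (i + 1))) ∧
    (∀ i, k < i → Subsingleton (P i))

/-- The sign character of `S_n`, extended by zero to all of `T_n`. -/
noncomputable def sgnExt (n : ℕ) (f : Function.End (Fin n)) : ℂ :=
  haveI : Decidable (Function.Bijective f) := Fintype.decidableBijectiveFintype f
  if h : Function.Bijective f then ((Equiv.Perm.sign (Equiv.ofBijective f h) : ℤ) : ℂ) else 0

/-! A map `f ∈ T_n` sends `Aug(ℂ^n)` into the span of the `v_j` with `j ∈ im f`, and this image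
misses `v_{f 0} ∉ Aug(ℂ^n)`, so `f` has rank at most `|im f| - 1` on `Aug(ℂ^n)`; a linear map of
rank `< k` kills `Λ^k`, because any `k` vectors in its image are dependent. Conversely, when
`r ≤ m`, the idempotent `e_m` fixes the independent vectors `v_i - v_0` (`1 ≤ i ≤ r - 1`), whose
wedge product is nonzero. -/

open Finset Module

namespace exteriorPower

variable {K M N : Type*} [Field K] [AddCommGroup M] [Module K M] [AddCommGroup N] [Module K N]
  {k : ℕ}

theorem ιMulti_ne_zero_of_linearIndependent {v : Fin k → M} (hv : LinearIndependent K v) :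
    ιMulti K k v ≠ 0 := by
  simpa [ιMulti_family] using
    (ιMulti_family_linearIndependent_field (n := k) hv).ne_zero
      (Set.powersetCard.ofFinEmbEquiv (OrderIso.refl (Fin k)).toOrderEmbedding)

theorem map_ne_zero_of_linearIndependent (φ : M →ₗ[K] N) {v : Fin k → M}
    (hv : LinearIndependent K (φ ∘ v)) : map k φ ≠ 0 := fun h =>
  ιMulti_ne_zero_of_linearIndependent hv <| by
    rw [← map_apply_ιMulti, h, LinearMap.zero_apply]

theorem map_eq_zero_of_finrank_range_lt (φ : M →ₗ[K] N)
    [FiniteDimensional K (LinearMap.range φ)] (h : finrank K (LinearMap.range φ) < k) :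
    map k φ = 0 := by
  refine linearMap_ext (AlternatingMap.ext fun v => ?_)
  suffices ¬ LinearIndependent K (φ ∘ v) by
    simpa only [LinearMap.compAlternatingMap_apply, map_apply_ιMulti, LinearMap.zero_apply]
      using AlternatingMap.map_linearDependent (ιMulti K k) _ this
  intro hv
  have := (LinearIndependent.of_comp (LinearMap.range φ).subtype
    (v := φ.rangeRestrict ∘ v) hv).fintype_card_le_finrank
  rw [Fintype.card_fin] at this
  omega

end exteriorPower

theorem extMap_eq_exteriorPower_map {R M N : Type} [CommRing R] [AddCommGroup M] [Module R M]
    [AddCommGroup N] [Module R N] (k : ℕ) (f : M →ₗ[R] N) :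
    extMap k f = exteriorPower.map k f := by
  refine exteriorPower.linearMap_ext (AlternatingMap.ext fun v => Subtype.ext ?_)
  rw [LinearMap.compAlternatingMap_apply, LinearMap.compAlternatingMap_apply,
    exteriorPower.map_apply_ιMulti]
  exact ExteriorAlgebra.map_apply_ιMulti f v

theorem LinearMap.finrank_range_restrict_lt {K V : Type*} [DivisionRing K] [AddCommGroup V]
    [Module K V] [FiniteDimensional K V] (g : V →ₗ[K] V) {p : Submodule K V}
    (hp : ∀ x ∈ p, g x ∈ p) (h : ¬ LinearMap.range g ≤ p) :
    finrank K (LinearMap.range (g.restrict hp)) < finrank K (LinearMap.range g) := by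
  rw [← Submodule.finrank_map_subtype_eq]
  calc finrank K ((LinearMap.range (g.restrict hp)).map p.subtype)
      ≤ finrank K ↥(LinearMap.range g ⊓ p) := by
        refine Submodule.finrank_mono ?_
        rintro _ ⟨_, ⟨x, rfl⟩, rfl⟩
        exact ⟨LinearMap.mem_range_self g x, (g.restrict hp x).2⟩
    _ < finrank K (LinearMap.range g) := Submodule.finrank_lt_finrank_of_lt (inf_lt_left.2 h)

theorem linearIndependent_single_sub_single {R ι κ : Type*} [Ring R] [DecidableEq ι]
    {c : κ → ι} (hc : Function.Injective c) {j : ι} (hj : j ∉ Set.range c) :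
    LinearIndependent R (fun i => (Pi.single (c i) 1 - Pi.single j 1 : ι → R)) := by
  classical
  refine LinearIndependent.of_comp (LinearMap.funLeft R R c) ?_
  convert Pi.linearIndependent_single_one κ R using 1
  funext i x
  have : c x ≠ j := fun h => hj ⟨x, h⟩
  simp [LinearMap.funLeft, Pi.single_apply, hc.eq_iff, this]

section TransformationMonoid

variable {n : ℕ}

theorem natRep_single (f : Function.End (Fin n)) (i : Fin n) :
    natRep n f (Pi.single i 1) = Pi.single (f i) 1 := by
  funext j
  show ∑ x, (if f x = j then Pi.single i 1 x else 0) = _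
  rw [Fintype.sum_eq_single i fun x hx => by simp [hx]]
  simp [Pi.single_apply, eq_comm]

theorem range_natRep (f : Function.End (Fin n)) :
    LinearMap.range (natRep n f) =
      Submodule.span ℂ (Set.range fun i => (Pi.single (f i) 1 : Fin n → ℂ)) := by
  rw [LinearMap.range_eq_map, ← (Pi.basisFun ℂ (Fin n)).span_eq, Submodule.map_span,
    ← Set.range_comp]
  simp [Function.comp_def, natRep_single]

theorem finrank_range_natRep_le (f : Function.End (Fin n)) :
    finrank ℂ (LinearMap.range (natRep n f)) ≤ #(univ.image f) := by
  rw [range_natRep]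
  refine (finrank_span_le_card _).trans ?_
  rw [Set.toFinset_range]
  calc #(univ.image fun i => (Pi.single (f i) 1 : Fin n → ℂ))
      ≤ #((univ.image f).image fun j => (Pi.single j 1 : Fin n → ℂ)) :=
        Finset.card_le_card fun x hx => by
          obtain ⟨i, -, rfl⟩ := Finset.mem_image.1 hx
          exact Finset.mem_image_of_mem _ (Finset.mem_image_of_mem f (Finset.mem_univ i))
    _ ≤ #(univ.image f) := Finset.card_image_le

theorem single_sub_single_mem_aug (i j : Fin n) : Pi.single i 1 - Pi.single j 1 ∈ Aug n := by
  show ∑ x, (Pi.single i 1 - Pi.single j 1 : Fin n → ℂ) x = 0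
  simp [Finset.sum_sub_distrib]

theorem range_natRep_not_le_aug (hn : 0 < n) (f : Function.End (Fin n)) :
    ¬ LinearMap.range (natRep n f) ≤ Aug n := fun h => by
  have : ∑ x, (Pi.single (f ⟨0, hn⟩) 1 : Fin n → ℂ) x = 0 := by
    rw [← natRep_single]
    exact h (LinearMap.mem_range_self _ _)
  simp at this

theorem finrank_range_augRep_lt (hn : 0 < n) (f : Function.End (Fin n)) :
    finrank ℂ (LinearMap.range (augRep n f)) < #(univ.image f) :=
  (LinearMap.finrank_range_restrict_lt _ (fun _ hx => natRep_mem_aug n f hx)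
    (range_natRep_not_le_aug hn f)).trans_le (finrank_range_natRep_le f)

theorem extAugRep_eq_exteriorPower_map (k : ℕ) (f : Function.End (Fin n)) :
    extAugRep n k f = exteriorPower.map k (augRep n f) :=
  extMap_eq_exteriorPower_map k _

theorem extAugRep_eq_zero_of_card_image_le (hn : 0 < n) {k : ℕ} {f : Function.End (Fin n)}
    (hf : #(univ.image f) ≤ k) : extAugRep n k f = 0 := by
  rw [extAugRep_eq_exteriorPower_map]
  exact exteriorPower.map_eq_zero_of_finrank_range_lt _
    ((finrank_range_augRep_lt hn f).trans_le hf)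

theorem eIdem_apply_of_lt {m : ℕ} {i : Fin n} (h : (i : ℕ) < m) : eIdem n m i = i := by
  simp [eIdem, h]

theorem eIdem_lt {m : ℕ} (hm : 0 < m) (i : Fin n) : (eIdem n m i : ℕ) < m := by
  dsimp only [eIdem]
  split_ifs with h
  exacts [h, hm]

theorem card_image_eIdem_le {m : ℕ} (hm : 0 < m) : #(univ.image (eIdem n m)) ≤ m := by
  simpa using Finset.card_le_card_of_injOn Fin.val (t := range m) (fun j hj => by
    obtain ⟨i, -, rfl⟩ := Finset.mem_image.1 hj
    exact Finset.mem_range.2 (eIdem_lt hm i)) Fin.val_injective.injOn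

theorem extAugRep_eIdem_ne_zero {k m : ℕ} (hkm : k < m) (hmn : m ≤ n) :
    extAugRep n k (eIdem n m) ≠ 0 := by
  let c : Fin k → Fin n := fun i => ⟨i + 1, by omega⟩
  let j₀ : Fin n := ⟨0, by omega⟩
  let a : Fin k → Aug n := fun i =>
    ⟨Pi.single (c i) 1 - Pi.single j₀ 1, single_sub_single_mem_aug _ _⟩
  have hfix : augRep n (eIdem n m) ∘ a = a := by
    funext i
    refine Subtype.ext ?_
    show natRep n (eIdem n m) (Pi.single (c i) 1 - Pi.single j₀ 1) = _
    rw [map_sub, natRep_single, natRep_single,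
      eIdem_apply_of_lt (i := c i) (show (i : ℕ) + 1 < m by omega),
      eIdem_apply_of_lt (i := j₀) (show 0 < m by omega)]
  have ha : LinearIndependent ℂ a :=
    LinearIndependent.of_comp (Aug n).subtype <| linearIndependent_single_sub_single
      (fun i j h => Fin.ext (by simpa [c] using h)) (by simp [c, j₀])
  rw [extAugRep_eq_exteriorPower_map]
  exact exteriorPower.map_ne_zero_of_linearIndependent _ (hfix ▸ ha)

end TransformationMonoid

theorem eIdem_kills_exteriorPower_iff_general (n r m : ℕ) (hrn : r ≤ n)
    (hm : 1 ≤ m) (hmn : m ≤ n) :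
    (extAugRep n (r-1) (eIdem n m) = 0 ↔ m < r) ∧
    (∀ f : Function.End (Fin n), (Finset.univ.image f).card < r →
      extAugRep n (r-1) f = 0) := by
  have kill : ∀ f : Function.End (Fin n), #(univ.image f) < r → extAugRep n (r-1) f = 0 :=
    fun f hf => extAugRep_eq_zero_of_card_image_le (Nat.zero_lt_of_lt (hf.trans_le hrn))
      (Nat.le_sub_one_of_lt hf)
  refine ⟨⟨fun h => ?_, fun h => kill _ ((card_image_eIdem_le hm).trans_lt h)⟩, kill⟩
  by_contra! hrm
  exact extAugRep_eIdem_ne_zero (by omega) hmn h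

/-- For the idempotent `e_m ∈ T_n` and `1 ≤ r, m ≤ n`, the action of `e_m` on
`Λ^{r−1}(Aug(ℂ^n))` is zero if and only if `m < r`. In particular, every map
`f ∈ T_n` of rank less than `r` acts as zero on `Λ^{r−1}(Aug(ℂ^n))`. -/
theorem eIdem_kills_exteriorPower_iff (n r m : ℕ) (hr : 1 ≤ r) (hrn : r ≤ n)
    (hm : 1 ≤ m) (hmn : m ≤ n) :
    (extAugRep n (r-1) (eIdem n m) = 0 ↔ m < r) ∧
    (∀ f : Function.End (Fin n), (Finset.univ.image f).card < r →
      extAugRep n (r-1) f = 0) :=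
  eIdem_kills_exteriorPower_iff_general n r m hrn hm hmn
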